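/- arXiv:2308.15177 — 7 statements merged into one kernel-verified Lean document; each statement's English description precedes it below -/
import Mathlib

section
/- Let P be a symmetric positive definite 6×6 real matrix with Q = P⁻¹, and let α > 0 satisfy the LMI Q Aᵀ + A Q − 2 B Bᵀ ⪯ −α Q. Suppose ρ > 0 is such that the closed Euclidean ball {v ∈ ℝ³ : ‖v‖₂² ≤ ρ} is contained in V_c, and ε > 0 is such that for every ξ ∈ ℝ⁶, ξᵀPξ ≤ ε implies ‖BᵀPξ‖₂² ≤ ρ. Fix γ ≥ 1 and let ξ : [0,∞) → ℝ⁶ be a differentiable function satisfying ξ'(t) = A ξ(t) + B·sat(−γ BᵀP ξ(t)) for all t ≥ 0, with ξ(0)ᵀPξ(0) ≤ ε. Then for all t ≥ 0, ξ(t)ᵀPξ(t) ≤ ε and ξ(t)ᵀPξ(t) ≤ e^{−αt}·ξ(0)ᵀPξ(0); in particular the ellipsoid E = {ξ : ξᵀPξ ≤ ε} is invariant and the state converges exponentially to the origin from within E. -/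
/-!
`V = ξᵀPξ` is a Lyapunov function. Evaluating the LMI at `Pξ` gives
`2 (Pξ)ᵀAξ ≤ -αV + 2‖BᵀPξ‖²`. While `V ≤ ε`, the vector `-BᵀPξ` lies in the ball inside `V_c`,
so saturation scales the feedback `-γBᵀPξ` by `λ* ≥ 1/γ`, and the input term contributes at most
`-2‖BᵀPξ‖²`; hence `V' ≤ -αV`. On the boundary `V = ε` this forces `V' < 0`, so the ellipsoid
is forward invariant, and then Grönwall's inequality yields `V(t) ≤ e^{-αt} V(0)`.
-/

open Matrix Set

noncomputable section

/-- The convex input-constraint set `V_c` in the flat output space. -/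
def Vc (g Tmax εmax : ℝ) : Set (Fin 3 → ℝ) :=
  {v | (v 0) ^ 2 + (v 1) ^ 2 + (v 2 + g) ^ 2 ≤ Tmax ^ 2 ∧
       (v 0) ^ 2 + (v 1) ^ 2 ≤ (Real.tan εmax) ^ 2 * (v 2 + g) ^ 2 ∧
       -g ≤ v 2}

/-- Saturation factor `λ*(w) = sup {λ ∈ (0,1] : λ w ∈ K}`. -/
def lamStar (K : Set (Fin 3 → ℝ)) (w : Fin 3 → ℝ) : ℝ :=
  sSup {l : ℝ | l ∈ Set.Ioc (0 : ℝ) 1 ∧ l • w ∈ K}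

/-- Saturated vector `sat(w) = λ*(w) w`. -/
def sat (K : Set (Fin 3 → ℝ)) (w : Fin 3 → ℝ) : Fin 3 → ℝ :=
  lamStar K w • w

/-- Quadcopter state matrix `A = [[0,I],[0,0]]`. -/
def quadA : Matrix (Fin 3 ⊕ Fin 3) (Fin 3 ⊕ Fin 3) ℝ :=
  Matrix.fromBlocks 0 1 0 0

/-- Quadcopter input matrix `B = [0; I]`. -/
def quadB : Matrix (Fin 3 ⊕ Fin 3) (Fin 3) ℝ :=
  Matrix.of (Sum.elim (fun _ _ => (0 : ℝ)) (fun i j => if i = j then 1 else 0))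

theorem Matrix.IsSymm.dotProduct_mulVec_eq {n : Type*} [Fintype n] {P : Matrix n n ℝ}
    (hP : P.IsSymm) (u v : n → ℝ) : u ⬝ᵥ (P *ᵥ v) = (P *ᵥ u) ⬝ᵥ v := by
  rw [dotProduct_mulVec, ← mulVec_transpose, hP.eq]

theorem Matrix.IsSymm.hasDerivAt_dotProduct_mulVec {n : Type*} [Fintype n] {P : Matrix n n ℝ}
    (hP : P.IsSymm) {f : ℝ → n → ℝ} {f' : n → ℝ} {t : ℝ} (hf : HasDerivAt f f' t) :
    HasDerivAt (fun s => f s ⬝ᵥ (P *ᵥ f s)) (2 * ((P *ᵥ f t) ⬝ᵥ f')) t := by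
  have hPf : HasDerivAt (fun s => P *ᵥ f s) (P *ᵥ f') t :=
    P.mulVecLin.toContinuousLinearMap.hasFDerivAt.comp_hasDerivAt t hf
  have h : ∀ i ∈ Finset.univ, HasDerivAt (fun s => f s i * (P *ᵥ f s) i)
      (f' i * (P *ᵥ f t) i + f t i * (P *ᵥ f') i) t :=
    fun i _ => (hasDerivAt_pi.1 hf i).mul (hasDerivAt_pi.1 hPf i)
  refine (HasDerivAt.fun_sum h).congr_deriv ?_
  rw [Finset.sum_add_distrib]
  change f' ⬝ᵥ (P *ᵥ f t) + f t ⬝ᵥ (P *ᵥ f') = _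
  rw [hP.dotProduct_mulVec_eq (f t), dotProduct_comm f']
  ring

theorem Matrix.IsSymm.two_dotProduct_mulVec_le_of_lmi {n m : Type*} [Fintype n] [DecidableEq n]
    [Fintype m] {P A : Matrix n n ℝ} {B : Matrix n m ℝ} {α : ℝ} (hPsym : P.IsSymm)
    (hP : IsUnit P)
    (hLMI : (-(α • P⁻¹) - (P⁻¹ * Aᵀ + A * P⁻¹ - (2 : ℝ) • (B * Bᵀ))).PosSemidef) (x : n → ℝ) :
    2 * ((P *ᵥ x) ⬝ᵥ (A *ᵥ x)) ≤
      -α * (x ⬝ᵥ (P *ᵥ x)) + 2 * ((Bᵀ *ᵥ (P *ᵥ x)) ⬝ᵥ (Bᵀ *ᵥ (P *ᵥ x))) := by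
  have hinv : P⁻¹ *ᵥ (P *ᵥ x) = x := by
    rw [mulVec_mulVec, nonsing_inv_mul _ ((isUnit_iff_isUnit_det P).mp hP), one_mulVec]
  have h := hLMI.dotProduct_mulVec_nonneg (P *ᵥ x)
  simp only [star_trivial, sub_mulVec, add_mulVec, neg_mulVec, smul_mulVec, ← mulVec_mulVec,
    dotProduct_sub, dotProduct_add, dotProduct_neg, dotProduct_smul, smul_eq_mul,
    hPsym.inv.dotProduct_mulVec_eq (P *ᵥ x), hinv] at h
  rw [dotProduct_mulVec x, ← mulVec_transpose, transpose_transpose,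
    dotProduct_mulVec (P *ᵥ x) B, ← mulVec_transpose, dotProduct_comm (P *ᵥ x) x,
    dotProduct_comm (A *ᵥ x)] at h
  linarith

theorem inv_le_lamStar_smul {K : Set (Fin 3 → ℝ)} {w : Fin 3 → ℝ} (hw : w ∈ K) {γ : ℝ}
    (hγ : 1 ≤ γ) : γ⁻¹ ≤ lamStar K (γ • w) := by
  have hγ0 : 0 < γ := zero_lt_one.trans_le hγ
  refine le_csSup ⟨1, fun l hl => hl.1.2⟩
    ⟨⟨inv_pos.mpr hγ0, inv_le_one_of_one_le₀ hγ⟩, ?_⟩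
  rwa [smul_smul, inv_mul_cancel₀ hγ0.ne', one_smul]

theorem dotProduct_sat_neg_smul_le {K : Set (Fin 3 → ℝ)} {u : Fin 3 → ℝ} (hu : -u ∈ K)
    {γ : ℝ} (hγ : 1 ≤ γ) : u ⬝ᵥ sat K (-(γ • u)) ≤ -(u ⬝ᵥ u) := by
  have hμ : 1 ≤ lamStar K (γ • -u) * γ :=
    (inv_le_iff_one_le_mul₀ (zero_lt_one.trans_le hγ)).mp (inv_le_lamStar_smul hu hγ)
  have huu : 0 ≤ u ⬝ᵥ u := by simpa using dotProduct_self_star_nonneg u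
  rw [← smul_neg, sat, smul_smul, dotProduct_smul, dotProduct_neg, smul_eq_mul]
  nlinarith

theorem image_le_of_hasDerivAt_neg_of_eq {f f' : ℝ → ℝ} {c : ℝ}
    (hf : ∀ t ≥ 0, HasDerivAt f (f' t) t) (h0 : f 0 ≤ c)
    (hc : ∀ t ≥ 0, f t = c → f' t < 0) :
    ∀ t ≥ 0, f t ≤ c := by
  intro t ht
  refine image_le_of_deriv_right_lt_deriv_boundary (a := 0) (b := t) (B := fun _ => c) (B' := 0)
    (fun s hs => (hf s hs.1).continuousAt.continuousWithinAt)
    (fun s hs => (hf s hs.1).hasDerivWithinAt) h0 (fun _ => hasDerivAt_const _ _)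
    (fun s hs => hc s hs.1) ⟨ht, le_rfl⟩

theorem le_exp_mul_of_hasDerivAt_le {f f' : ℝ → ℝ} {α : ℝ}
    (hf : ∀ t ≥ 0, HasDerivAt f (f' t) t) (hbound : ∀ t ≥ 0, f' t ≤ -α * f t) :
    ∀ t ≥ 0, f t ≤ Real.exp (-α * t) * f 0 := by
  intro t ht
  have := le_gronwallBound_of_liminf_deriv_right_le (a := 0) (b := t) (K := -α) (ε := 0)
    (fun s hs => (hf s hs.1).continuousAt.continuousWithinAt)
    (fun s hs _ hr => (hf s hs.1).hasDerivWithinAt.liminf_right_slope_le hr) le_rfl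
    (fun s hs => (add_zero (-α * f s)).symm ▸ hbound s hs.1) t ⟨ht, le_rfl⟩
  rwa [gronwallBound_ε0, sub_zero, mul_comm] at this

theorem Matrix.IsSymm.two_dotProduct_saturated_feedback_le {n : Type*} [Fintype n]
    [DecidableEq n] {P A : Matrix n n ℝ} {B : Matrix n (Fin 3) ℝ} {K : Set (Fin 3 → ℝ)} {α γ : ℝ}
    (hPsym : P.IsSymm) (hP : IsUnit P)
    (hLMI : (-(α • P⁻¹) - (P⁻¹ * Aᵀ + A * P⁻¹ - (2 : ℝ) • (B * Bᵀ))).PosSemidef) (hγ : 1 ≤ γ)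
    {x : n → ℝ} (hx : -(Bᵀ *ᵥ (P *ᵥ x)) ∈ K) :
    2 * ((P *ᵥ x) ⬝ᵥ (A *ᵥ x + B *ᵥ sat K (-(γ • (Bᵀ *ᵥ (P *ᵥ x)))))) ≤
      -α * (x ⬝ᵥ (P *ᵥ x)) := by
  rw [dotProduct_add, dotProduct_mulVec (P *ᵥ x) B, ← mulVec_transpose]
  linarith [hPsym.two_dotProduct_mulVec_le_of_lmi hP hLMI x, dotProduct_sat_neg_smul_le hx hγ]

theorem stmt0_general
    (g Tmax εmax : ℝ)
    (P : Matrix (Fin 3 ⊕ Fin 3) (Fin 3 ⊕ Fin 3) ℝ) (hPsym : P.IsSymm) (hP : P.PosDef)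
    (Q : Matrix (Fin 3 ⊕ Fin 3) (Fin 3 ⊕ Fin 3) ℝ) (hQ : Q = P⁻¹)
    (α : ℝ) (hα : 0 < α)
    (hLMI : (-(α • Q) - (Q * quadAᵀ + quadA * Q - (2 : ℝ) • (quadB * quadBᵀ))).PosSemidef)
    (ρ : ℝ)
    (hball : {v : Fin 3 → ℝ | v ⬝ᵥ v ≤ ρ} ⊆ Vc g Tmax εmax)
    (ε : ℝ) (hε : 0 < ε)
    (himpl : ∀ ξ : Fin 3 ⊕ Fin 3 → ℝ, ξ ⬝ᵥ (P *ᵥ ξ) ≤ ε →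
      (quadBᵀ *ᵥ (P *ᵥ ξ)) ⬝ᵥ (quadBᵀ *ᵥ (P *ᵥ ξ)) ≤ ρ)
    (γ : ℝ) (hγ : 1 ≤ γ)
    (ξ : ℝ → (Fin 3 ⊕ Fin 3 → ℝ))
    (hdyn : ∀ t ≥ (0 : ℝ), HasDerivAt ξ
      (quadA *ᵥ ξ t + quadB *ᵥ sat (Vc g Tmax εmax) (-(γ • (quadBᵀ *ᵥ (P *ᵥ ξ t))))) t)
    (h0 : ξ 0 ⬝ᵥ (P *ᵥ ξ 0) ≤ ε) :
    ∀ t ≥ (0 : ℝ),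
      ξ t ⬝ᵥ (P *ᵥ ξ t) ≤ ε ∧
      ξ t ⬝ᵥ (P *ᵥ ξ t) ≤ Real.exp (-α * t) * (ξ 0 ⬝ᵥ (P *ᵥ ξ 0)) := by
  subst hQ
  set V : ℝ → ℝ := fun t => ξ t ⬝ᵥ (P *ᵥ ξ t)
  have hV := fun t ht => hPsym.hasDerivAt_dotProduct_mulVec (hdyn t ht)
  have hVderiv : ∀ t, V t ≤ ε → 2 * ((P *ᵥ ξ t) ⬝ᵥ (quadA *ᵥ ξ t +
      quadB *ᵥ sat (Vc g Tmax εmax) (-(γ • (quadBᵀ *ᵥ (P *ᵥ ξ t)))))) ≤ -α * V t :=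
    fun t ht => hPsym.two_dotProduct_saturated_feedback_le hP.isUnit hLMI hγ
      (hball (by simpa using himpl _ ht))
  have hinv : ∀ t ≥ 0, V t ≤ ε := image_le_of_hasDerivAt_neg_of_eq hV h0
    fun t _ hVt => (hVderiv t hVt.le).trans_lt
      (by rw [hVt, neg_mul]; exact neg_neg_of_pos (mul_pos hα hε))
  exact fun t ht =>
    ⟨hinv t ht, le_exp_mul_of_hasDerivAt_le hV (fun s hs => hVderiv s (hinv s hs)) t ht⟩

theorem stmt0
    (g Tmax εmax : ℝ) (hg : 0 < g) (hT : 0 < Tmax) (hεmax : εmax ∈ Set.Ioo 0 (Real.pi / 2))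
    (P : Matrix (Fin 3 ⊕ Fin 3) (Fin 3 ⊕ Fin 3) ℝ) (hPsym : P.IsSymm) (hP : P.PosDef)
    (Q : Matrix (Fin 3 ⊕ Fin 3) (Fin 3 ⊕ Fin 3) ℝ) (hQ : Q = P⁻¹)
    (α : ℝ) (hα : 0 < α)
    (hLMI : (-(α • Q) - (Q * quadAᵀ + quadA * Q - (2 : ℝ) • (quadB * quadBᵀ))).PosSemidef)
    (ρ : ℝ) (hρ : 0 < ρ)
    (hball : {v : Fin 3 → ℝ | v ⬝ᵥ v ≤ ρ} ⊆ Vc g Tmax εmax)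
    (ε : ℝ) (hε : 0 < ε)
    (himpl : ∀ ξ : Fin 3 ⊕ Fin 3 → ℝ, ξ ⬝ᵥ (P *ᵥ ξ) ≤ ε →
      (quadBᵀ *ᵥ (P *ᵥ ξ)) ⬝ᵥ (quadBᵀ *ᵥ (P *ᵥ ξ)) ≤ ρ)
    (γ : ℝ) (hγ : 1 ≤ γ)
    (ξ : ℝ → (Fin 3 ⊕ Fin 3 → ℝ))
    (hdyn : ∀ t ≥ (0 : ℝ), HasDerivAt ξ
      (quadA *ᵥ ξ t + quadB *ᵥ sat (Vc g Tmax εmax) (-(γ • (quadBᵀ *ᵥ (P *ᵥ ξ t))))) t)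
    (h0 : ξ 0 ⬝ᵥ (P *ᵥ ξ 0) ≤ ε) :
    ∀ t ≥ (0 : ℝ),
      ξ t ⬝ᵥ (P *ᵥ ξ t) ≤ ε ∧
      ξ t ⬝ᵥ (P *ᵥ ξ t) ≤ Real.exp (-α * t) * (ξ 0 ⬝ᵥ (P *ᵥ ξ 0)) :=
  stmt0_general g Tmax εmax P hPsym hP Q hQ α hα hLMI ρ hball ε hε himpl γ hγ ξ hdyn h0
end
end

section
/- Let P be a symmetric positive semidefinite n×n real matrix, B an n×m real matrix, and let ε > 0, ρ > 0, τ ≥ 0 be scalars such that the block-diagonal matrix diag(P − τ·P B Bᵀ P, −ε + τρ) is positive semidefinite (equivalently, P − τ P B Bᵀ P ⪰ 0 and τρ ≥ ε). Then for every ξ ∈ ℝⁿ, ξᵀPξ ≤ ε implies ‖BᵀPξ‖₂² ≤ ρ. -/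
/-!
The principal blocks of the block-diagonal matrix are positive semidefinite. Testing the upper
block against `ξ` gives `τ ‖BᵀPξ‖² ≤ ξᵀPξ ≤ ε`, since `P B Bᵀ P = (BᵀP)ᵀ(BᵀP)` for symmetric `P`;
the lower block gives `ε ≤ τρ`. Hence `τ > 0` and `‖BᵀPξ‖² ≤ ρ`.
-/

open Matrix

namespace Matrix

variable {l m n o R : Type*}

section PosSemidef

variable [Ring R] [PartialOrder R] [StarRing R]
  {A : Matrix l l R} {B : Matrix l o R} {C : Matrix o l R} {D : Matrix o o R}

theorem PosSemidef.of_fromBlocks₁₁ (h : (fromBlocks A B C D).PosSemidef) : A.PosSemidef :=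
  h.submatrix Sum.inl

theorem PosSemidef.of_fromBlocks₂₂ (h : (fromBlocks A B C D).PosSemidef) : D.PosSemidef :=
  h.submatrix Sum.inr

end PosSemidef

theorem dotProduct_mulVec_transpose_mul_self [Fintype m] [Fintype n] [CommSemiring R]
    (A : Matrix m n R) (x : n → R) :
    x ⬝ᵥ ((Aᵀ * A) *ᵥ x) = (A *ᵥ x) ⬝ᵥ (A *ᵥ x) := by
  rw [← mulVec_mulVec, dotProduct_mulVec, vecMul_transpose]

end Matrix

theorem stmt1_general (n m : ℕ)
    (P : Matrix (Fin n) (Fin n) ℝ) (hPsym : P.IsSymm)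
    (B : Matrix (Fin n) (Fin m) ℝ)
    (ε ρ τ : ℝ) (hε : 0 < ε) (hτ : 0 ≤ τ)
    (hblock : (Matrix.fromBlocks (P - τ • (P * B * Bᵀ * P)) 0 0
        (Matrix.of fun (_ _ : Fin 1) => -ε + τ * ρ)).PosSemidef) :
    ∀ ξ : Fin n → ℝ, ξ ⬝ᵥ (P *ᵥ ξ) ≤ ε →
      (Bᵀ *ᵥ (P *ᵥ ξ)) ⬝ᵥ (Bᵀ *ᵥ (P *ᵥ ξ)) ≤ ρ := by
  intro ξ hξ
  have hgram : P * B * Bᵀ * P = (Bᵀ * P)ᵀ * (Bᵀ * P) := by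
    rw [transpose_mul, transpose_transpose, hPsym.eq, Matrix.mul_assoc]
  have hquad : τ * ((Bᵀ *ᵥ (P *ᵥ ξ)) ⬝ᵥ (Bᵀ *ᵥ (P *ᵥ ξ))) ≤ ξ ⬝ᵥ (P *ᵥ ξ) := by
    have h := hblock.of_fromBlocks₁₁.dotProduct_mulVec_nonneg ξ
    rw [star_trivial, sub_mulVec, dotProduct_sub, smul_mulVec, dotProduct_smul, hgram,
      dotProduct_mulVec_transpose_mul_self, ← mulVec_mulVec, smul_eq_mul] at h
    linarith
  have hcorner : ε ≤ τ * ρ := by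
    have h := hblock.of_fromBlocks₂₂.diag_nonneg (i := 0)
    simp only [of_apply] at h
    linarith
  have hτpos : 0 < τ := hτ.lt_of_ne (by rintro rfl; linarith)
  exact le_of_mul_le_mul_left (by linarith) hτpos

theorem stmt1 (n m : ℕ)
    (P : Matrix (Fin n) (Fin n) ℝ) (hPsym : P.IsSymm) (hP : P.PosSemidef)
    (B : Matrix (Fin n) (Fin m) ℝ)
    (ε ρ τ : ℝ) (hε : 0 < ε) (hρ : 0 < ρ) (hτ : 0 ≤ τ)
    (hblock : (Matrix.fromBlocks (P - τ • (P * B * Bᵀ * P)) 0 0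
        (Matrix.of fun (_ _ : Fin 1) => -ε + τ * ρ)).PosSemidef) :
    ∀ ξ : Fin n → ℝ, ξ ⬝ᵥ (P *ᵥ ξ) ≤ ε →
      (Bᵀ *ᵥ (P *ᵥ ξ)) ⬝ᵥ (Bᵀ *ᵥ (P *ᵥ ξ)) ≤ ρ :=
  stmt1_general n m P hPsym B ε ρ τ hε hτ hblock
end

section
/- Let P be a symmetric positive definite 6×6 real matrix with Q = P⁻¹ and α > 0 satisfying Q Aᵀ + A Q − 2 B Bᵀ ⪯ −α Q. Let ρ > 0 be such that the closed ball {v ∈ ℝ³ : ‖v‖₂² ≤ ρ} is contained in V_c. Then for every γ ≥ 1 and every ξ ∈ ℝ⁶ with ‖BᵀPξ‖₂² ≤ ρ, one has γ·λ*(−γBᵀPξ) ≥ 1 and 2·ξᵀP(Aξ + B·sat(−γBᵀPξ)) ≤ −α·ξᵀPξ, i.e., the Lyapunov function V(ξ) = ξᵀPξ decreases at exponential rate α along the saturated closed loop. -/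
open Matrix Set

noncomputable section

/-! The ball `{v | v ⬝ᵥ v ≤ ρ}` lies in `V_c` and contains `-BᵀPξ`, so `1/γ` is an admissible
scaling of `-γBᵀPξ`; hence `sat(-γBᵀPξ) = -μ BᵀPξ` with gain `μ = γ λ* ≥ 1`. Multiplying the LMI
by `P` on both sides turns it into `AᵀP + PA - 2PBBᵀP ⪯ -αP`, and along the feedback
`u = -μ BᵀPξ` the input term `-2μ‖BᵀPξ‖²` is at most `-2‖BᵀPξ‖²`. -/

theorem one_le_mul_lamStar_smul {K : Set (Fin 3 → ℝ)} {v : Fin 3 → ℝ} (hv : v ∈ K)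
    {γ : ℝ} (hγ : 1 ≤ γ) : 1 ≤ γ * lamStar K (γ • v) := by
  have hγ0 : 0 < γ := one_pos.trans_le hγ
  have hmem : γ⁻¹ ∈ {l : ℝ | l ∈ Ioc (0 : ℝ) 1 ∧ l • γ • v ∈ K} :=
    ⟨⟨inv_pos.2 hγ0, inv_le_one_of_one_le₀ hγ⟩,
      by rwa [smul_smul, inv_mul_cancel₀ hγ0.ne', one_smul]⟩
  have hle : γ⁻¹ ≤ lamStar K (γ • v) := le_csSup ⟨1, fun l hl => hl.1.2⟩ hmem
  calc 1 = γ * γ⁻¹ := (mul_inv_cancel₀ hγ0.ne').symm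
    _ ≤ γ * lamStar K (γ • v) := mul_le_mul_of_nonneg_left hle hγ0.le

section Lyapunov

variable {n m : Type*} [Fintype n] [DecidableEq n] [Fintype m]
  {P A : Matrix n n ℝ} {B : Matrix n m ℝ} {α : ℝ}

theorem Matrix.PosDef.lyapunov_posSemidef_of_inv (hP : P.PosDef)
    (hLMI : (-(α • P⁻¹) - (P⁻¹ * Aᵀ + A * P⁻¹ - (2 : ℝ) • (B * Bᵀ))).PosSemidef) :
    (-(α • P) - (Aᵀ * P + P * A - (2 : ℝ) • (P * B * (P * B)ᵀ))).PosSemidef := by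
  have hdet : IsUnit P.det := (P.isUnit_iff_isUnit_det).1 hP.isUnit
  have hPt : Pᵀ = P := by simpa using hP.isHermitian.eq
  convert hLMI.conjTranspose_mul_mul_same P using 1
  simp only [conjTranspose_eq_transpose_of_trivial, hPt, transpose_mul, Matrix.mul_sub,
    Matrix.sub_mul, Matrix.mul_add, Matrix.add_mul, Matrix.mul_neg, Matrix.neg_mul,
    Matrix.mul_smul, Matrix.smul_mul, Matrix.mul_assoc, mul_nonsing_inv_cancel_left (h := hdet),
    P.nonsing_inv_mul hdet, Matrix.mul_one]

theorem dotProduct_lyapunov_saturated_le (hP : P.PosDef)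
    (hLMI : (-(α • P⁻¹) - (P⁻¹ * Aᵀ + A * P⁻¹ - (2 : ℝ) • (B * Bᵀ))).PosSemidef)
    (ξ : n → ℝ) {μ : ℝ} (hμ : 1 ≤ μ) :
    2 * (ξ ⬝ᵥ (P *ᵥ (A *ᵥ ξ + B *ᵥ -(μ • (Bᵀ *ᵥ (P *ᵥ ξ)))))) ≤ -α * (ξ ⬝ᵥ (P *ᵥ ξ)) := by
  set w := Bᵀ *ᵥ (P *ᵥ ξ) with hw
  have hPt : Pᵀ = P := by simpa using hP.isHermitian.eq
  have hPB (z : m → ℝ) : ξ ⬝ᵥ (P *ᵥ (B *ᵥ z)) = w ⬝ᵥ z := by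
    rw [dotProduct_mulVec, ← hPt, vecMul_transpose, dotProduct_mulVec, ← mulVec_transpose]
  have hA : ξ ⬝ᵥ ((Aᵀ * P) *ᵥ ξ) = ξ ⬝ᵥ (P *ᵥ (A *ᵥ ξ)) := by
    rw [← mulVec_mulVec, dotProduct_mulVec, vecMul_transpose, dotProduct_comm,
      dotProduct_mulVec ξ P, ← mulVec_transpose, hPt]
  have hform := (hP.lyapunov_posSemidef_of_inv hLMI).dotProduct_mulVec_nonneg ξ
  simp only [star_trivial, sub_mulVec, add_mulVec, neg_mulVec, smul_mulVec, dotProduct_sub,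
    dotProduct_add, dotProduct_neg, dotProduct_smul, smul_eq_mul, hA] at hform
  simp only [transpose_mul, hPt, ← mulVec_mulVec, hPB, ← hw] at hform
  rw [mulVec_add, dotProduct_add, hPB, dotProduct_neg, dotProduct_smul, smul_eq_mul]
  have hww : 0 ≤ w ⬝ᵥ w := by simpa only [star_trivial] using dotProduct_star_self_nonneg w
  nlinarith [mul_le_mul_of_nonneg_right hμ hww]

end Lyapunov

theorem stmt4_general
    (g Tmax εmax : ℝ)
    (P : Matrix (Fin 3 ⊕ Fin 3) (Fin 3 ⊕ Fin 3) ℝ) (hP : P.PosDef)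
    (Q : Matrix (Fin 3 ⊕ Fin 3) (Fin 3 ⊕ Fin 3) ℝ) (hQ : Q = P⁻¹)
    (α : ℝ)
    (hLMI : (-(α • Q) - (Q * quadAᵀ + quadA * Q - (2 : ℝ) • (quadB * quadBᵀ))).PosSemidef)
    (ρ : ℝ)
    (hball : {v : Fin 3 → ℝ | v ⬝ᵥ v ≤ ρ} ⊆ Vc g Tmax εmax)
    (γ : ℝ) (hγ : 1 ≤ γ)
    (ξ : Fin 3 ⊕ Fin 3 → ℝ)
    (hξ : (quadBᵀ *ᵥ (P *ᵥ ξ)) ⬝ᵥ (quadBᵀ *ᵥ (P *ᵥ ξ)) ≤ ρ) :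
    1 ≤ γ * lamStar (Vc g Tmax εmax) (-(γ • (quadBᵀ *ᵥ (P *ᵥ ξ)))) ∧
    2 * (ξ ⬝ᵥ (P *ᵥ (quadA *ᵥ ξ +
        quadB *ᵥ sat (Vc g Tmax εmax) (-(γ • (quadBᵀ *ᵥ (P *ᵥ ξ))))))) ≤
      -α * (ξ ⬝ᵥ (P *ᵥ ξ)) := by
  subst hQ
  set w := quadBᵀ *ᵥ (P *ᵥ ξ)
  have hw : -w ∈ Vc g Tmax εmax :=
    hball (show -w ⬝ᵥ -w ≤ ρ by rwa [neg_dotProduct_neg])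
  have hfactor : 1 ≤ γ * lamStar (Vc g Tmax εmax) (-(γ • w)) := by
    simpa only [smul_neg] using one_le_mul_lamStar_smul hw hγ
  refine ⟨hfactor, ?_⟩
  rw [sat, smul_neg, smul_smul, mul_comm (lamStar _ _)]
  exact dotProduct_lyapunov_saturated_le hP hLMI ξ hfactor

theorem stmt4
    (g Tmax εmax : ℝ) (hg : 0 < g) (hT : 0 < Tmax) (hεmax : εmax ∈ Set.Ioo 0 (Real.pi / 2))
    (P : Matrix (Fin 3 ⊕ Fin 3) (Fin 3 ⊕ Fin 3) ℝ) (hPsym : P.IsSymm) (hP : P.PosDef)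
    (Q : Matrix (Fin 3 ⊕ Fin 3) (Fin 3 ⊕ Fin 3) ℝ) (hQ : Q = P⁻¹)
    (α : ℝ) (hα : 0 < α)
    (hLMI : (-(α • Q) - (Q * quadAᵀ + quadA * Q - (2 : ℝ) • (quadB * quadBᵀ))).PosSemidef)
    (ρ : ℝ) (hρ : 0 < ρ)
    (hball : {v : Fin 3 → ℝ | v ⬝ᵥ v ≤ ρ} ⊆ Vc g Tmax εmax)
    (γ : ℝ) (hγ : 1 ≤ γ)
    (ξ : Fin 3 ⊕ Fin 3 → ℝ)
    (hξ : (quadBᵀ *ᵥ (P *ᵥ ξ)) ⬝ᵥ (quadBᵀ *ᵥ (P *ᵥ ξ)) ≤ ρ) :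
    1 ≤ γ * lamStar (Vc g Tmax εmax) (-(γ • (quadBᵀ *ᵥ (P *ᵥ ξ)))) ∧
    2 * (ξ ⬝ᵥ (P *ᵥ (quadA *ᵥ ξ +
        quadB *ᵥ sat (Vc g Tmax εmax) (-(γ • (quadBᵀ *ᵥ (P *ᵥ ξ))))))) ≤
      -α * (ξ ⬝ᵥ (P *ᵥ ξ)) :=
  stmt4_general g Tmax εmax P hP Q hQ α hLMI ρ hball γ hγ ξ hξ
end
end

section
/- Let A_cl be an n×n real matrix, E an n×p real matrix, Q a symmetric positive definite n×n matrix, and β > 0 a scalar such that Q A_clᵀ + A_cl Q + β·Q + β⁻¹·E Eᵀ ⪯ 0. Let w : [0,∞) → ℝᵖ be a function with ‖w(t)‖₂ ≤ 1 for all t ≥ 0, and let ξ : [0,∞) → ℝⁿ be differentiable with ξ'(t) = A_cl ξ(t) + E w(t) for all t ≥ 0. If ξ(0)ᵀQ⁻¹ξ(0) ≤ 1, then ξ(t)ᵀQ⁻¹ξ(t) ≤ 1 for all t ≥ 0; that is, the ellipsoid E_w = {x ∈ ℝⁿ : xᵀQ⁻¹x ≤ 1} is invariant for the disturbed system. -/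
/-!
Along a trajectory, `V(ξ) = ξᵀ Q⁻¹ ξ` has derivative `2 yᵀ(A ξ + E w)` with `y = Q⁻¹ ξ`. Evaluating
the LMI at `y` and bounding the cross term by Young's inequality
`2 (Eᵀy)ᵀ w ≤ β⁻¹ |Eᵀy|² + β |w|²` gives `V' ≤ β (1 - V)`, so by Grönwall's inequality `V - 1`
cannot become positive once it starts nonpositive.
-/

open Matrix

section

variable {ι κ : Type*} [Fintype ι] [Fintype κ]

theorem HasDerivAt.dotProduct {u v : ℝ → ι → ℝ} {u' v' : ι → ℝ} {t : ℝ}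
    (hu : HasDerivAt u u' t) (hv : HasDerivAt v v' t) :
    HasDerivAt (fun s => u s ⬝ᵥ v s) (u' ⬝ᵥ v t + u t ⬝ᵥ v') t := by
  simp only [_root_.dotProduct, ← Finset.sum_add_distrib]
  exact HasDerivAt.fun_sum fun i _ => (hasDerivAt_pi.1 hu i).mul (hasDerivAt_pi.1 hv i)

theorem HasDerivAt.mulVec (M : Matrix κ ι ℝ) {u : ℝ → ι → ℝ} {u' : ι → ℝ} {t : ℝ}
    (hu : HasDerivAt u u' t) : HasDerivAt (fun s => M *ᵥ u s) (M *ᵥ u') t :=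
  (LinearMap.toContinuousLinearMap (mulVecLin M)).hasFDerivAt.comp_hasDerivAt t hu

theorem le_of_hasDerivAt_le_mul_sub {V D : ℝ → ℝ} {a β c : ℝ}
    (hV : ∀ t ≥ a, HasDerivAt V (D t) t) (hD : ∀ t ≥ a, D t ≤ β * (c - V t)) (ha : V a ≤ c) :
    ∀ t ≥ a, V t ≤ c := by
  intro t ht
  have hVc : ∀ s ∈ Set.Icc a t, HasDerivAt (fun s => V s - c) (D s) s :=
    fun s hs => (hV s hs.1).sub_const c
  have hgronwall := le_gronwallBound_of_liminf_deriv_right_le (f := fun s => V s - c)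
    (δ := 0) (K := -β) (ε := 0)
    (fun s hs => (hVc s hs).continuousAt.continuousWithinAt)
    (fun s hs r hr => (hVc s (Set.Ico_subset_Icc_self hs)).hasDerivWithinAt.liminf_right_slope_le hr)
    (by simpa using ha) (fun s hs => by linarith [hD s hs.1]) t ⟨ht, le_rfl⟩
  rw [gronwallBound_ε0_δ0] at hgronwall
  linarith

theorem two_mul_dotProduct_le {β : ℝ} (hβ : 0 < β) (a v : κ → ℝ) :
    2 * (a ⬝ᵥ v) ≤ β⁻¹ * (a ⬝ᵥ a) + β * (v ⬝ᵥ v) := by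
  simp only [dotProduct, Finset.mul_sum, ← Finset.sum_add_distrib]
  refine Finset.sum_le_sum fun i _ => ?_
  have hsq : 0 ≤ β⁻¹ * (a i - β * v i) ^ 2 := by positivity
  linear_combination hsq + (β * v i ^ 2 - 2 * a i * v i) * inv_mul_cancel₀ hβ.ne'

theorem Matrix.IsSymm.dotProduct_mulVec_comm {M : Matrix ι ι ℝ} (hM : M.IsSymm) (x z : ι → ℝ) :
    x ⬝ᵥ (M *ᵥ z) = z ⬝ᵥ (M *ᵥ x) := by
  rw [← dotProduct_transpose_mulVec, hM.eq]

theorem lyapunov_deriv_le_of_lmi [DecidableEq ι] {A : Matrix ι ι ℝ} {E : Matrix ι κ ℝ}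
    {Q : Matrix ι ι ℝ} (hQsym : Q.IsSymm) (hQ : IsUnit Q.det) {β : ℝ} (hβ : 0 < β)
    (hLMI : (-(Q * Aᵀ + A * Q + β • Q + β⁻¹ • (E * Eᵀ))).PosSemidef)
    (x : ι → ℝ) {v : κ → ℝ} (hv : v ⬝ᵥ v ≤ 1) :
    (A *ᵥ x + E *ᵥ v) ⬝ᵥ (Q⁻¹ *ᵥ x) + x ⬝ᵥ (Q⁻¹ *ᵥ (A *ᵥ x + E *ᵥ v))
      ≤ β * (1 - x ⬝ᵥ (Q⁻¹ *ᵥ x)) := by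
  set y := Q⁻¹ *ᵥ x
  have hx : x = Q *ᵥ y := by rw [mulVec_mulVec, mul_nonsing_inv Q hQ, one_mulVec]
  have hswap : ∀ z, x ⬝ᵥ (Q⁻¹ *ᵥ z) = y ⬝ᵥ z := fun z => by
    rw [Matrix.IsSymm.dotProduct_mulVec_comm hQsym.inv, dotProduct_comm]
  have hderiv : (A *ᵥ x + E *ᵥ v) ⬝ᵥ y + x ⬝ᵥ (Q⁻¹ *ᵥ (A *ᵥ x + E *ᵥ v))
      = 2 * (y ⬝ᵥ ((A * Q) *ᵥ y)) + 2 * ((Eᵀ *ᵥ y) ⬝ᵥ v) := by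
    rw [hswap, dotProduct_comm _ y, ← mulVec_mulVec, ← hx, mulVec_transpose,
      ← dotProduct_mulVec, dotProduct_add]
    ring
  have hV : x ⬝ᵥ y = y ⬝ᵥ (Q *ᵥ y) := by rw [dotProduct_comm, ← hx]
  have hsymm : y ⬝ᵥ ((Q * Aᵀ) *ᵥ y) = y ⬝ᵥ ((A * Q) *ᵥ y) := by
    rw [show Q * Aᵀ = (A * Q)ᵀ by rw [transpose_mul, hQsym.eq], dotProduct_transpose_mulVec]
  have hEE : y ⬝ᵥ ((E * Eᵀ) *ᵥ y) = (Eᵀ *ᵥ y) ⬝ᵥ (Eᵀ *ᵥ y) := by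
    rw [← mulVec_mulVec, dotProduct_mulVec, ← mulVec_transpose]
  have hLMIy : y ⬝ᵥ ((Q * Aᵀ + A * Q + β • Q + β⁻¹ • (E * Eᵀ)) *ᵥ y) ≤ 0 := by
    have h := hLMI.dotProduct_mulVec_nonneg y
    rw [star_trivial, neg_mulVec, dotProduct_neg] at h
    linarith
  simp only [add_mulVec, smul_mulVec, dotProduct_add, dotProduct_smul, smul_eq_mul,
    hsymm, hEE] at hLMIy
  have hyoung := two_mul_dotProduct_le hβ (Eᵀ *ᵥ y) v
  have hβv := mul_le_mul_of_nonneg_left hv hβ.le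
  rw [hderiv, hV]
  linarith

end

theorem stmt7 (n p : ℕ)
    (Acl : Matrix (Fin n) (Fin n) ℝ) (E : Matrix (Fin n) (Fin p) ℝ)
    (Q : Matrix (Fin n) (Fin n) ℝ) (hQsym : Q.IsSymm) (hQ : Q.PosDef)
    (β : ℝ) (hβ : 0 < β)
    (hLMI : (-(Q * Aclᵀ + Acl * Q + β • Q + β⁻¹ • (E * Eᵀ))).PosSemidef)
    (w : ℝ → (Fin p → ℝ)) (hw : ∀ t ≥ (0 : ℝ), w t ⬝ᵥ w t ≤ 1)
    (ξ : ℝ → (Fin n → ℝ))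
    (hdyn : ∀ t ≥ (0 : ℝ), HasDerivAt ξ (Acl *ᵥ ξ t + E *ᵥ w t) t)
    (h0 : ξ 0 ⬝ᵥ (Q⁻¹ *ᵥ ξ 0) ≤ 1) :
    ∀ t ≥ (0 : ℝ), ξ t ⬝ᵥ (Q⁻¹ *ᵥ ξ t) ≤ 1 :=
  le_of_hasDerivAt_le_mul_sub
    (fun t ht => (hdyn t ht).dotProduct ((hdyn t ht).mulVec Q⁻¹))
    (fun t ht => lyapunov_deriv_le_of_lmi hQsym hQ.det_pos.ne'.isUnit hβ hLMI (ξ t) (hw t ht))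
    h0
end

section
/- Let A be an n×n real matrix, B an n×m real matrix, E an n×p real matrix, Q a symmetric positive definite n×n matrix with P = Q⁻¹, and β > 0 such that Q Aᵀ + A Q − 2 B Bᵀ + β·Q + β⁻¹·E Eᵀ ⪯ 0. Then for every scalar κ ≥ 1, the closed-loop matrix A_cl = A − κ·B Bᵀ P satisfies Q A_clᵀ + A_cl Q + β·Q + β⁻¹·E Eᵀ ⪯ 0. -/
/- With the feedback `u = -κ Bᵀ P x` the cross terms `Q (B Bᵀ P)ᵀ` and `(B Bᵀ P) Q` both collapse to
`B Bᵀ` because `P = Q⁻¹` is symmetric, so the closed-loop LMI matrix is the nominal one plus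
`-(2κ - 2) B Bᵀ`. For `κ ≥ 1` this extra term is negative semidefinite, which only strengthens
the inequality. -/

open Matrix

theorem Matrix.mul_transpose_add_mul_of_feedback {n R : Type*} [Fintype n] [DecidableEq n]
    [CommRing R] {Q S : Matrix n n R} (hQ : IsUnit Q.det) (hQT : Qᵀ = Q) (hS : Sᵀ = S)
    (A : Matrix n n R) (κ : R) :
    Q * (A - κ • (S * Q⁻¹))ᵀ + (A - κ • (S * Q⁻¹)) * Q = Q * Aᵀ + A * Q - (2 * κ) • S := by
  have hQinvT : Q⁻¹ᵀ = Q⁻¹ := by rw [transpose_nonsing_inv, hQT]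
  have hleft : Q * (S * Q⁻¹)ᵀ = S := by
    rw [transpose_mul, hQinvT, hS, ← Matrix.mul_assoc, mul_nonsing_inv Q hQ, Matrix.one_mul]
  have hright : S * Q⁻¹ * Q = S := by
    rw [Matrix.mul_assoc, nonsing_inv_mul Q hQ, Matrix.mul_one]
  rw [transpose_sub, transpose_smul, Matrix.mul_sub, Matrix.mul_smul, hleft, Matrix.sub_mul,
    Matrix.smul_mul, hright]
  module

theorem stmt10_general (n m p : ℕ)
    (A : Matrix (Fin n) (Fin n) ℝ) (B : Matrix (Fin n) (Fin m) ℝ)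
    (E : Matrix (Fin n) (Fin p) ℝ)
    (Q : Matrix (Fin n) (Fin n) ℝ) (hQ : Q.PosDef)
    (P : Matrix (Fin n) (Fin n) ℝ) (hP : P = Q⁻¹)
    (β : ℝ)
    (hLMI : (-(Q * Aᵀ + A * Q - (2 : ℝ) • (B * Bᵀ) + β • Q + β⁻¹ • (E * Eᵀ))).PosSemidef) :
    ∀ κ : ℝ, 1 ≤ κ →
      (-(Q * (A - κ • (B * Bᵀ * P))ᵀ + (A - κ • (B * Bᵀ * P)) * Q + β • Q +
          β⁻¹ • (E * Eᵀ))).PosSemidef := by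
  intro κ hκ
  subst hP
  have hQT : Qᵀ = Q := by
    simpa only [IsHermitian, conjTranspose_eq_transpose_of_trivial] using hQ.isHermitian
  have hBBt : (B * Bᵀ).PosSemidef := by
    simpa only [conjTranspose_eq_transpose_of_trivial] using posSemidef_self_mul_conjTranspose B
  rw [mul_transpose_add_mul_of_feedback ((isUnit_iff_isUnit_det Q).mp hQ.isUnit) hQT
    (by rw [transpose_mul, transpose_transpose])]
  have hsplit : -(Q * Aᵀ + A * Q - (2 * κ) • (B * Bᵀ) + β • Q + β⁻¹ • (E * Eᵀ)) =
      -(Q * Aᵀ + A * Q - (2 : ℝ) • (B * Bᵀ) + β • Q + β⁻¹ • (E * Eᵀ)) +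
        (2 * κ - 2) • (B * Bᵀ) := by
    module
  rw [hsplit]
  exact hLMI.add (hBBt.smul (by linarith))

theorem stmt10 (n m p : ℕ)
    (A : Matrix (Fin n) (Fin n) ℝ) (B : Matrix (Fin n) (Fin m) ℝ)
    (E : Matrix (Fin n) (Fin p) ℝ)
    (Q : Matrix (Fin n) (Fin n) ℝ) (hQsym : Q.IsSymm) (hQ : Q.PosDef)
    (P : Matrix (Fin n) (Fin n) ℝ) (hP : P = Q⁻¹)
    (β : ℝ) (hβ : 0 < β)
    (hLMI : (-(Q * Aᵀ + A * Q - (2 : ℝ) • (B * Bᵀ) + β • Q + β⁻¹ • (E * Eᵀ))).PosSemidef) :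
    ∀ κ : ℝ, 1 ≤ κ →
      (-(Q * (A - κ • (B * Bᵀ * P))ᵀ + (A - κ • (B * Bᵀ * P)) * Q + β • Q +
          β⁻¹ • (E * Eᵀ))).PosSemidef :=
  stmt10_general n m p A B E Q hQ P hP β hLMI
end

section
/- For any constants g > 0, T_max > 0 and ε_max ∈ (0, π/2), the set V_c = {v = (v₁,v₂,v₃) ∈ ℝ³ : ‖v + g e₃‖₂² ≤ T_max², v₁² + v₂² ≤ tan²(ε_max)·(v₃ + g)², v₃ ≥ −g} is convex and compact. -/
open Set

set_option maxHeartbeats 1000000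

noncomputable section

theorem stmt12 (g Tmax εmax : ℝ) (hg : 0 < g) (hT : 0 < Tmax)
    (hεmax : εmax ∈ Set.Ioo 0 (Real.pi / 2)) :
    Convex ℝ (Vc g Tmax εmax) ∧ IsCompact (Vc g Tmax εmax) := by
  have ht : 0 < Real.tan εmax := Real.tan_pos_of_pos_of_lt_pi_div_two hεmax.1 hεmax.2
  constructor
  · intro x hx y hy a b ha hb hab
    obtain ⟨hx1, hx2, hx3⟩ := hx
    obtain ⟨hy1, hy2, hy3⟩ := hy
    have hxg : 0 ≤ x 2 + g := by linarith
    have hyg : 0 ≤ y 2 + g := by linarith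
    -- cross term for the cone via Cauchy-Schwarz
    have hcross : x 0 * y 0 + x 1 * y 1 ≤
        Real.tan εmax ^ 2 * ((x 2 + g) * (y 2 + g)) := by
      nlinarith [sq_nonneg (x 0 * y 1 - x 1 * y 0), sq_nonneg (x 0 * y 0 + x 1 * y 1),
        mul_nonneg hxg hyg, mul_nonneg (mul_nonneg hxg hyg) (sq_nonneg (Real.tan εmax)),
        mul_le_mul hx2 hy2 (by positivity) (by positivity),
        sq_nonneg (x 0 * y 0 + x 1 * y 1 -
          Real.tan εmax ^ 2 * ((x 2 + g) * (y 2 + g)))]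
    have hb1 : b = 1 - a := by linarith
    subst hb1
    have ha1 : 0 ≤ 1 - a := hb
    refine ⟨?_, ?_, ?_⟩
    · show (a * x 0 + (1 - a) * y 0) ^ 2 + (a * x 1 + (1 - a) * y 1) ^ 2 +
        (a * x 2 + (1 - a) * y 2 + g) ^ 2 ≤ Tmax ^ 2
      nlinarith [mul_le_mul_of_nonneg_left hx1 ha, mul_le_mul_of_nonneg_left hy1 ha1,
        mul_nonneg (mul_nonneg ha ha1) (sq_nonneg (x 0 - y 0)),
        mul_nonneg (mul_nonneg ha ha1) (sq_nonneg (x 1 - y 1)),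
        mul_nonneg (mul_nonneg ha ha1) (sq_nonneg (x 2 - y 2))]
    · show (a * x 0 + (1 - a) * y 0) ^ 2 + (a * x 1 + (1 - a) * y 1) ^ 2 ≤
        Real.tan εmax ^ 2 * (a * x 2 + (1 - a) * y 2 + g) ^ 2
      have h2ab : (0:ℝ) ≤ 2 * (a * (1 - a)) := by positivity
      calc (a * x 0 + (1 - a) * y 0) ^ 2 + (a * x 1 + (1 - a) * y 1) ^ 2
          = a ^ 2 * (x 0 ^ 2 + x 1 ^ 2) +
            2 * (a * (1 - a)) * (x 0 * y 0 + x 1 * y 1) +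
            (1 - a) ^ 2 * (y 0 ^ 2 + y 1 ^ 2) := by ring
        _ ≤ a ^ 2 * (Real.tan εmax ^ 2 * (x 2 + g) ^ 2) +
            2 * (a * (1 - a)) * (Real.tan εmax ^ 2 * ((x 2 + g) * (y 2 + g))) +
            (1 - a) ^ 2 * (Real.tan εmax ^ 2 * (y 2 + g) ^ 2) :=
          add_le_add (add_le_add (mul_le_mul_of_nonneg_left hx2 (sq_nonneg a))
            (mul_le_mul_of_nonneg_left hcross h2ab))
            (mul_le_mul_of_nonneg_left hy2 (sq_nonneg (1 - a)))
        _ = Real.tan εmax ^ 2 * (a * x 2 + (1 - a) * y 2 + g) ^ 2 := by ring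
    · show -g ≤ a * x 2 + (1 - a) * y 2
      nlinarith [mul_nonneg ha hxg, mul_nonneg ha1 hyg]
  · have hcl : IsClosed (Vc g Tmax εmax) := by
      have h1 : IsClosed {v : Fin 3 → ℝ |
          (v 0) ^ 2 + (v 1) ^ 2 + (v 2 + g) ^ 2 ≤ Tmax ^ 2} := by
        apply isClosed_le _ continuous_const
        fun_prop
      have h2 : IsClosed {v : Fin 3 → ℝ |
          (v 0) ^ 2 + (v 1) ^ 2 ≤ Real.tan εmax ^ 2 * (v 2 + g) ^ 2} := by
        apply isClosed_le <;> fun_prop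
      have h3 : IsClosed {v : Fin 3 → ℝ | -g ≤ v 2} := by
        apply isClosed_le continuous_const
        fun_prop
      exact (h1.inter (h2.inter h3) : _)
    have hsub : Vc g Tmax εmax ⊆ Metric.closedBall 0 (Tmax + g) := by
      intro v hv
      obtain ⟨h1, h2, h3⟩ := hv
      rw [Metric.mem_closedBall, dist_zero_right]
      have hbound : ∀ i : Fin 3, |v i| ≤ Tmax + g := by
        intro i
        fin_cases i
        · show |v 0| ≤ Tmax + g
          rw [abs_le]; constructor <;> nlinarith [sq_nonneg (v 1), sq_nonneg (v 2 + g)]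
        · show |v 1| ≤ Tmax + g
          rw [abs_le]; constructor <;> nlinarith [sq_nonneg (v 0), sq_nonneg (v 2 + g)]
        · show |v 2| ≤ Tmax + g
          rw [abs_le]; constructor <;> nlinarith [sq_nonneg (v 0), sq_nonneg (v 1)]
      exact (pi_norm_le_iff_of_nonneg (by positivity)).2 hbound
    exact (isCompact_closedBall (0 : Fin 3 → ℝ) (Tmax + g)).of_isClosed_subset hcl hsub
end
end

section
/- Let ε ∈ (0, π/2) and let h = (h₁,h₂,h₃) ∈ ℝ³ with h₃ > 0 and h₁² + h₂² ≤ tan²(ε)·h₃². Then |arcsin(h₂/‖h‖₂)| ≤ ε and |arctan(h₁/h₃)| ≤ ε. -/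
noncomputable section

theorem stmt13 (ε h₁ h₂ h₃ : ℝ) (hε : ε ∈ Set.Ioo 0 (Real.pi / 2))
    (hh₃ : 0 < h₃) (hcone : h₁ ^ 2 + h₂ ^ 2 ≤ (Real.tan ε) ^ 2 * h₃ ^ 2) :
    |Real.arcsin (h₂ / Real.sqrt (h₁ ^ 2 + h₂ ^ 2 + h₃ ^ 2))| ≤ ε ∧
    |Real.arctan (h₁ / h₃)| ≤ ε := by
  obtain ⟨hε0, hε2⟩ := hε
  have hεlt : -(Real.pi/2) < ε := by linarith [Real.pi_pos]
  have htanpos : 0 < Real.tan ε := Real.tan_pos_of_pos_of_lt_pi_div_two hε0 hε2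
  have hcos : 0 < Real.cos ε := Real.cos_pos_of_mem_Ioo ⟨hεlt, hε2⟩
  have hsin : 0 < Real.sin ε := Real.sin_pos_of_pos_of_lt_pi hε0 (by linarith [Real.pi_pos])
  constructor
  · set s := h₁ ^ 2 + h₂ ^ 2 + h₃ ^ 2 with hs
    have hspos : 0 < s := by positivity
    have hsq : 0 < Real.sqrt s := Real.sqrt_pos.mpr hspos
    have hkey : |h₂ / Real.sqrt s| ≤ Real.sin ε := by
      rw [abs_div, abs_of_pos hsq, div_le_iff₀ hsq]
      have h1 : h₂ ^ 2 * Real.cos ε ^ 2 ≤ Real.sin ε ^ 2 * h₃ ^ 2 := by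
        have ht := Real.tan_eq_sin_div_cos ε
        have h2 : h₂ ^ 2 ≤ (Real.sin ε / Real.cos ε) ^ 2 * h₃ ^ 2 := by
          rw [← ht]; nlinarith [sq_nonneg h₁]
        rw [div_pow] at h2
        calc h₂ ^ 2 * Real.cos ε ^ 2 ≤ (Real.sin ε ^ 2 / Real.cos ε ^ 2 * h₃ ^ 2) * Real.cos ε ^ 2 := by
              nlinarith [sq_nonneg (Real.cos ε)]
          _ = Real.sin ε ^ 2 * h₃ ^ 2 := by field_simp
      have h3 : h₂ ^ 2 ≤ Real.sin ε ^ 2 * s := by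
        have hpyth : Real.cos ε ^ 2 = 1 - Real.sin ε ^ 2 := by
          have := Real.sin_sq_add_cos_sq ε; linarith
        rw [hpyth] at h1
        nlinarith [sq_nonneg h₁, sq_nonneg (Real.sin ε)]
      have h4 : |h₂| ^ 2 ≤ (Real.sin ε * Real.sqrt s) ^ 2 := by
        rw [mul_pow, Real.sq_sqrt hspos.le, sq_abs]; exact h3
      exact (abs_le_of_sq_le_sq' h4 (by positivity)).2.trans_eq rfl |>.trans (le_of_eq rfl)
    have hub : h₂ / Real.sqrt s ≤ Real.sin ε := (abs_le.mp hkey).2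
    have hlb : -Real.sin ε ≤ h₂ / Real.sqrt s := (abs_le.mp hkey).1
    have hbnd : |h₂ / Real.sqrt s| ≤ 1 := hkey.trans (Real.sin_le_one ε)
    rw [abs_le]
    constructor
    · have h5 : Real.arcsin (-Real.sin ε) ≤ Real.arcsin (h₂ / Real.sqrt s) :=
        Real.monotone_arcsin hlb
      rw [Real.arcsin_neg, Real.arcsin_sin hεlt.le hε2.le, neg_le] at h5
      linarith
    · have h5 : Real.arcsin (h₂ / Real.sqrt s) ≤ Real.arcsin (Real.sin ε) :=
        Real.monotone_arcsin hub
      rwa [Real.arcsin_sin hεlt.le hε2.le] at h5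
  · have hkey : |h₁ / h₃| ≤ Real.tan ε := by
      rw [abs_div, abs_of_pos hh₃, div_le_iff₀ hh₃]
      have h4 : |h₁| ^ 2 ≤ (Real.tan ε * h₃) ^ 2 := by
        rw [sq_abs, mul_pow]; nlinarith [sq_nonneg h₂]
      exact (abs_le_of_sq_le_sq' h4 (by positivity)).2
    rw [abs_le]
    refine ⟨?_, ?_⟩
    · have h5 : Real.arctan (-Real.tan ε) ≤ Real.arctan (h₁ / h₃) :=
        Real.arctan_strictMono.monotone (by linarith [(abs_le.mp hkey).1])
      rw [Real.arctan_neg, Real.arctan_tan hεlt hε2, neg_le] at h5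
      linarith
    · have h5 : Real.arctan (h₁ / h₃) ≤ Real.arctan (Real.tan ε) :=
        Real.arctan_strictMono.monotone (abs_le.mp hkey).2
      rwa [Real.arctan_tan hεlt hε2] at h5
end
end
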